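/- For the alternative Green's function Monte Carlo transition probability G2(y,x;t) = (cosh(Δt·Γ(t)) · e^{−Δt·Γ(t)})^N · tanh(Δt·Γ(t))^{δ(y,x)}, where δ(y,x) is the Hamming distance between spin configurations x and y: (i) G2(·,·;t) is a stochastic matrix, i.e. Σ_{y∈S} G2(y,x;t) = 1 for every x; (ii) the uniform distribution on S is stationary for G2(·,·;t); and (iii) the coefficient of ergodicity satisfies 1 − α(G2(t)) ≥ { (1 − e^{−2Δt·Γ(t)}) / 2 }^N. -/
import Mathlib


open Finset Filter

namespace QAPaper

variable {S : Type*}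

/-- A probability distribution on the finite state space `S`, viewed as a vector. -/
def IsProbVec [Fintype S] (p : S → ℝ) : Prop :=
  (∀ x, 0 ≤ p x) ∧ ∑ x, p x = 1

/-- The ℓ¹ norm distance `‖p - p'‖ = ∑ₓ |p(x) - p'(x)|`. -/
noncomputable def dist1 [Fintype S] (p p' : S → ℝ) : ℝ := ∑ x, |p x - p' x|

/-- A column-stochastic matrix: entries nonnegative, columns sum to one. -/
def IsStochastic [Fintype S] (G : Matrix S S ℝ) : Prop :=
  (∀ y x, 0 ≤ G y x) ∧ ∀ x, ∑ y, G y x = 1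

/-- `prodG G t t0 = G (t-1) * G (t-2) * ⋯ * G t0`. -/
noncomputable def prodG [Fintype S] [DecidableEq S] (G : ℕ → Matrix S S ℝ) (t t0 : ℕ) :
    Matrix S S ℝ :=
  (((List.range (t - t0)).map fun k => G (t0 + k)).reverse).prod

/-- Weak ergodicity: the distribution forgets its initial condition. -/
def WeaklyErgodic [Fintype S] [DecidableEq S] (G : ℕ → Matrix S S ℝ) : Prop :=
  ∀ t0 : ℕ, ∀ ε > (0 : ℝ), ∃ T : ℕ, ∀ t ≥ T,
    ∀ p0 p0' : S → ℝ, IsProbVec p0 → IsProbVec p0' →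
      dist1 ((prodG G t t0).mulVec p0) ((prodG G t t0).mulVec p0') ≤ ε

/-- Strong ergodicity towards a fixed distribution `r`. -/
def StronglyErgodicTo [Fintype S] [DecidableEq S] (G : ℕ → Matrix S S ℝ) (r : S → ℝ) : Prop :=
  ∀ t0 : ℕ, ∀ ε > (0 : ℝ), ∃ T : ℕ, ∀ t ≥ T,
    ∀ p0 : S → ℝ, IsProbVec p0 → dist1 ((prodG G t t0).mulVec p0) r ≤ ε

/-- Strong ergodicity. -/
def StronglyErgodic [Fintype S] [DecidableEq S] (G : ℕ → Matrix S S ℝ) : Prop :=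
  ∃ r : S → ℝ, IsProbVec r ∧ StronglyErgodicTo G r

/-- The coefficient of ergodicity `α(G)`. -/
noncomputable def ergCoeff [Fintype S] [Nonempty S] (G : Matrix S S ℝ) : ℝ :=
  1 - Finset.univ.inf' Finset.univ_nonempty fun p : S × S => ∑ z, min (G z p.1) (G z p.2)

/-- A generation probability: symmetric, vanishing on the diagonal, columns summing
to one, and irreducible. -/
structure IsGenProb [Fintype S] (P : S → S → ℝ) : Prop where
  symm : ∀ x y, P y x = P x y
  nonneg : ∀ x y, 0 ≤ P y x
  diag_zero : ∀ x, P x x = 0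
  sum_one : ∀ x, ∑ y, P y x = 1
  irreducible : ∀ x y : S, ∃ n > 0, ∃ z : ℕ → S,
    z 0 = x ∧ z n = y ∧ ∀ k < n, 0 < P (z (k + 1)) (z k)

/-- An acceptance function: monotone increasing, valued in `[0,1]`,
with `g (1/u) = g u / u`. -/
structure IsAcceptFn (g : ℝ → ℝ) : Prop where
  mono : MonotoneOn g (Set.Ici (0 : ℝ))
  maps : ∀ u : ℝ, 0 ≤ u → g u ∈ Set.Icc (0 : ℝ) 1
  ratio : ∀ u : ℝ, 0 < u → g (1 / u) = g u / u

/-- Partition function `Z(t)`. -/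
noncomputable def Zfun [Fintype S] (F0 F1 : S → ℝ) (T0 : ℝ) (T1 : ℕ → ℝ) (t : ℕ) : ℝ :=
  ∑ x, Real.exp (-(F0 x) / T0 - F1 x / T1 t)

/-- Time-dependent Boltzmann distribution `q(x;t)`. -/
noncomputable def qB [Fintype S] (F0 F1 : S → ℝ) (T0 : ℝ) (T1 : ℕ → ℝ) (t : ℕ) (x : S) : ℝ :=
  Real.exp (-(F0 x) / T0 - F1 x / T1 t) / Zfun F0 F1 T0 T1 t

/-- Transition matrix built from a generation probability `P` and an
acceptance probability `A`. -/
noncomputable def GmatOf [Fintype S] [DecidableEq S] (P : S → S → ℝ) (A : ℕ → S → S → ℝ)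
    (t : ℕ) : Matrix S S ℝ :=
  Matrix.of fun y x => if y = x then 1 - ∑ z, P z x * A t z x else P y x * A t y x

/-- Transition matrix of path-integral Monte Carlo quantum annealing. -/
noncomputable def Gpimc [Fintype S] [DecidableEq S] (P : S → S → ℝ) (g : ℝ → ℝ)
    (F0 F1 : S → ℝ) (T0 : ℝ) (T1 : ℕ → ℝ) : ℕ → Matrix S S ℝ :=
  GmatOf P fun t y x => g (qB F0 F1 T0 T1 t y / qB F0 F1 T0 T1 t x)

/-- The set `S_m` of local maxima of `F1` with respect to `P`. -/
def Sm [Fintype S] (P : S → S → ℝ) (F1 : S → ℝ) : Set S :=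
  {x | ∀ y, 0 < P y x → F1 y ≤ F1 x}

/-- `x` can reach `y` in exactly `n` elementary transitions. -/
def ReachIn (P : S → S → ℝ) (n : ℕ) (x y : S) : Prop :=
  ∃ f : ℕ → S, f 0 = x ∧ f n = y ∧ ∀ k < n, 0 < P (f (k + 1)) (f k)

/-- `d(y,x)`: the minimum number of transitions needed to go from `x` to `y`. -/
noncomputable def dSteps (P : S → S → ℝ) (x y : S) : ℕ :=
  sInf {n | ReachIn P n x y}

/-- `R = min { max { d(y,x) | y ∈ S } | x ∈ S \ S_m }`. -/
noncomputable def Rnum [Fintype S] (P : S → S → ℝ) (F1 : S → ℝ) : ℕ :=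
  sInf {r | ∃ x, x ∉ Sm P F1 ∧ r = Finset.univ.sup fun y => dSteps P x y}

/-- The maximum change of `F` in a single transition. -/
noncomputable def Lmax [Fintype S] (P : S → S → ℝ) (F : S → ℝ) : ℝ :=
  sSup {v | ∃ x y : S, 0 < P y x ∧ v = |F x - F y|}

/-- The minimum nonvanishing value of the generation probability. -/
noncomputable def wmin [Fintype S] (P : S → S → ℝ) : ℝ :=
  sInf {v | ∃ x y : S, 0 < P y x ∧ v = P y x}

/-- The set of global minima of `F1`. -/
def S1min [Fintype S] (F1 : S → ℝ) : Set S := {x | ∀ y, F1 x ≤ F1 y}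

/-- The limiting distribution: proportional to `exp (-F0 x / T0)` on the set of
global minima of `F1`, and zero elsewhere. -/
noncomputable def rLimit [Fintype S] (F0 F1 : S → ℝ) (T0 : ℝ) (x : S) : ℝ :=
  if ∀ y, F1 x ≤ F1 y then
    Real.exp (-(F0 x) / T0) /
      ∑ y ∈ Finset.univ.filter (fun y => ∀ z, F1 y ≤ F1 z), Real.exp (-(F0 y) / T0)
  else 0

/-- The ±1 value of a Boolean spin. -/
noncomputable def spin (b : Bool) : ℝ := if b then 1 else -1

/-- Classical Ising energy `E0(x) = -∑_{i<j} J_ij x_i x_j`. -/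
noncomputable def E0def (N : ℕ) (J : Fin N → Fin N → ℝ) (x : Fin N → Bool) : ℝ :=
  -∑ p ∈ Finset.univ.filter (fun p : Fin N × Fin N => p.1 < p.2),
    J p.1 p.2 * spin (x p.1) * spin (x p.2)

/-- Hamming distance between spin configurations. -/
def hamming (N : ℕ) (x y : Fin N → Bool) : ℕ :=
  (Finset.univ.filter fun i => x i ≠ y i).card

/-- GFMC weight `w(x;t) = 1 - Δt (E0(x) - E_T) + N Δt Γ(t)`. -/
noncomputable def wgt (N : ℕ) (J : Fin N → Fin N → ℝ) (Δt ET : ℝ) (Γ : ℕ → ℝ) (t : ℕ)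
    (x : Fin N → Bool) : ℝ :=
  1 - Δt * (E0def N J x - ET) + N * Δt * Γ t

/-- The normalized GFMC transition probability `G1(y,x;t)`. -/
noncomputable def G1mat (N : ℕ) (J : Fin N → Fin N → ℝ) (Δt ET : ℝ) (Γ : ℕ → ℝ) (t : ℕ) :
    Matrix (Fin N → Bool) (Fin N → Bool) ℝ :=
  Matrix.of fun y x =>
    if y = x then 1 - N * Δt * Γ t / wgt N J Δt ET Γ t x
    else if hamming N x y = 1 then Δt * Γ t / wgt N J Δt ET Γ t x
    else 0

/-- `E_min = min { E0(x) | x ∈ S }`. -/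
noncomputable def Emin (N : ℕ) (J : Fin N → Fin N → ℝ) : ℝ :=
  Finset.univ.inf' Finset.univ_nonempty (E0def N J)

/-- Stationary distribution `q(x;t) = w(x;t) / ∑_y w(y;t)` of GFMC. -/
noncomputable def qGFMC (N : ℕ) (J : Fin N → Fin N → ℝ) (Δt ET : ℝ) (Γ : ℕ → ℝ) (t : ℕ)
    (x : Fin N → Bool) : ℝ :=
  wgt N J Δt ET Γ t x / ∑ y, wgt N J Δt ET Γ t y

/-- The alternative GFMC transition probability `G2(y,x;t)`. -/
noncomputable def G2mat (N : ℕ) (Δt : ℝ) (Γ : ℕ → ℝ) (t : ℕ) :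
    Matrix (Fin N → Bool) (Fin N → Bool) ℝ :=
  Matrix.of fun y x =>
    (Real.cosh (Δt * Γ t) * Real.exp (-(Δt * Γ t))) ^ N *
      Real.tanh (Δt * Γ t) ^ hamming N x y

/-- Inverse hyperbolic tangent. -/
noncomputable def artanh (x : ℝ) : ℝ := (1 / 2) * Real.log ((1 + x) / (1 - x))

/-- The cost function of the Suzuki–Trotter representation of the TFIM:
`F0(x) = -(β/M) ∑_k ∑_{ij} J_ij S_i^(k) S_j^(k)`. -/
noncomputable def F0tfim (N M : ℕ) (β : ℝ) (J : Fin (N + 1) → Fin (N + 1) → ℝ)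
    (x : Fin (N + 1) × Fin M → Bool) : ℝ :=
  -(β / M) * ∑ k : Fin M, ∑ i : Fin (N + 1), ∑ j : Fin (N + 1),
    J i j * spin (x (i, k)) * spin (x (j, k))

/-- The kinetic term of the Suzuki–Trotter representation of the TFIM:
`F1(x) = -∑_k ∑_i S_i^(k) S_i^(k+1)` with periodic boundary along the Trotter direction. -/
noncomputable def F1tfim (N M : ℕ) [NeZero M] (x : Fin (N + 1) × Fin M → Bool) : ℝ :=
  -∑ k : Fin M, ∑ i : Fin (N + 1), spin (x (i, k)) * spin (x (i, k + 1))

/-- The ferromagnetic coupling `γ(t) = (1/2) log coth (β Γ(t) / M)` between Trotter slices. -/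
noncomputable def γtfim (M : ℕ) (β : ℝ) (Γ : ℕ → ℝ) (t : ℕ) : ℝ :=
  (1 / 2) * Real.log (1 / Real.tanh (β * Γ t / M))

/-- Tsallis-type generalized acceptance ratio `u(y,x;t)`. -/
noncomputable def uGen {S : Type*} (F0 F1 : S → ℝ) (T0 : ℝ) (T1 : ℕ → ℝ) (qp : ℝ) (t : ℕ)
    (y x : S) : ℝ :=
  Real.exp (-(F0 y - F0 x) / T0) *
    (1 + (qp - 1) * (F1 y - F1 x) / T1 t) ^ (1 / (1 - qp))


lemma hamming_comm (N : ℕ) (x y : Fin N → Bool) : hamming N x y = hamming N y x := by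
  unfold hamming
  congr 1
  ext i
  simp [ne_comm]

lemma pow_hamming_eq_prod (N : ℕ) (r : ℝ) (x y : Fin N → Bool) :
    r ^ hamming N x y = ∏ i, (if x i = y i then 1 else r) := by
  rw [hamming, Finset.prod_ite, Finset.prod_const_one, one_mul, Finset.prod_const]

lemma sum_pow_hamming (N : ℕ) (r : ℝ) (x : Fin N → Bool) :
    ∑ y : Fin N → Bool, r ^ hamming N x y = (1 + r) ^ N := by
  simp only [pow_hamming_eq_prod]
  have := (Finset.prod_univ_sum (fun _ : Fin N => (Finset.univ : Finset Bool))
    (f := fun i b => if x i = b then (1 : ℝ) else r)).symm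
  rw [Fintype.piFinset_univ] at this
  rw [this]
  have : ∀ i : Fin N, (∑ b : Bool, if x i = b then (1 : ℝ) else r) = 1 + r := by
    intro i
    cases h : x i <;> simp [Fintype.sum_bool, h, add_comm]
  simp_rw [this, Finset.prod_const, Finset.card_univ, Fintype.card_fin]

lemma G2_col_sum (N : ℕ) (Δt : ℝ) (Γ : ℕ → ℝ) (t : ℕ) (hpos : 0 < Δt * Γ t)
    (x : Fin N → Bool) : ∑ y : Fin N → Bool, G2mat N Δt Γ t y x = 1 := by
  set a := Δt * Γ t with ha
  have hcosh : (0 : ℝ) < Real.cosh a := Real.cosh_pos a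
  have key : Real.cosh a * Real.exp (-a) * (1 + Real.tanh a) = 1 := by
    have h1 : Real.cosh a * (1 + Real.tanh a) = Real.cosh a + Real.sinh a := by
      rw [Real.tanh_eq_sinh_div_cosh]
      field_simp
    calc Real.cosh a * Real.exp (-a) * (1 + Real.tanh a)
        = Real.exp (-a) * (Real.cosh a * (1 + Real.tanh a)) := by ring
      _ = Real.exp (-a) * Real.exp a := by rw [h1, Real.cosh_add_sinh]
      _ = 1 := by rw [← Real.exp_add]; simp
  calc ∑ y : Fin N → Bool, G2mat N Δt Γ t y x
      = (Real.cosh a * Real.exp (-a)) ^ N *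
        ∑ y : Fin N → Bool, Real.tanh a ^ hamming N x y := by
        rw [Finset.mul_sum]; rfl
    _ = (Real.cosh a * Real.exp (-a)) ^ N * (1 + Real.tanh a) ^ N := by
        rw [sum_pow_hamming]
    _ = 1 := by rw [← mul_pow, key, one_pow]

/-- Properties of the alternative GFMC transition probability `G2`:
it is column-stochastic, the uniform distribution is stationary for it, and its
coefficient of ergodicity satisfies
`1 - α(G2(t)) ≥ ((1 - exp (-2 Δt Γ(t)))/2)^N`. -/
theorem gfmc_G2_properties
    (N : ℕ) (hN : 0 < N) (Δt : ℝ) (hΔt : 0 < Δt)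
    (Γ : ℕ → ℝ) (hΓpos : ∀ t, 0 < Γ t) :
    (∀ t : ℕ, ∀ x : Fin N → Bool, ∑ y : Fin N → Bool, G2mat N Δt Γ t y x = 1) ∧
      (∀ t : ℕ, (G2mat N Δt Γ t).mulVec (fun _ => ((2 : ℝ) ^ N)⁻¹) =
        fun _ => ((2 : ℝ) ^ N)⁻¹) ∧
      ∀ t : ℕ, 1 - ergCoeff (G2mat N Δt Γ t) ≥
        ((1 - Real.exp (-(2 * Δt * Γ t))) / 2) ^ N := by
  have hpos : ∀ t, 0 < Δt * Γ t := fun t => mul_pos hΔt (hΓpos t)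
  refine ⟨fun t x => G2_col_sum N Δt Γ t (hpos t) x, ?_, ?_⟩
  · -- stationarity
    intro t
    funext y
    have hrow : ∑ x : Fin N → Bool, G2mat N Δt Γ t y x = 1 := by
      have := G2_col_sum N Δt Γ t (hpos t) y
      rw [← this]
      apply Finset.sum_congr rfl
      intro x _
      simp only [G2mat, Matrix.of_apply, hamming_comm N x y]
    simp only [Matrix.mulVec, dotProduct]
    rw [← Finset.sum_mul, hrow, one_mul]
  · -- ergodicity coefficient
    intro t
    set a := Δt * Γ t with ha
    have hapos : 0 < a := hpos t
    have hcosh : (0 : ℝ) < Real.cosh a := Real.cosh_pos a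
    have hsinh : (0 : ℝ) < Real.sinh a := Real.sinh_pos_iff.mpr hapos
    have htanh_pos : 0 < Real.tanh a := by
      rw [Real.tanh_eq_sinh_div_cosh]; positivity
    have htanh_le : Real.tanh a ≤ 1 := by
      rw [Real.tanh_eq_sinh_div_cosh, div_le_one hcosh]
      exact (Real.sinh_lt_cosh a).le
    set c : ℝ := (1 - Real.exp (-(2 * Δt * Γ t))) / 2 with hc
    have hckey : Real.cosh a * Real.exp (-a) * Real.tanh a = c := by
      have hct : Real.cosh a * Real.tanh a = Real.sinh a := by
        rw [Real.tanh_eq_sinh_div_cosh]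
        field_simp
      have h2 : Real.exp (-a) * Real.exp a = 1 := by rw [← Real.exp_add]; simp
      have h3 : Real.exp (-a) * Real.exp (-a) = Real.exp (-(2 * Δt * Γ t)) := by
        rw [← Real.exp_add]; congr 1; rw [ha]; ring
      calc Real.cosh a * Real.exp (-a) * Real.tanh a
          = Real.exp (-a) * (Real.cosh a * Real.tanh a) := by ring
        _ = Real.exp (-a) * Real.sinh a := by rw [hct]
        _ = c := by
            rw [Real.sinh_eq, hc]
            field_simp
            rw [mul_sub, h2, h3]
    have hentry : ∀ z x : Fin N → Bool, c ^ N ≤ G2mat N Δt Γ t z x := by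
      intro z x
      show c ^ N ≤ (Real.cosh a * Real.exp (-a)) ^ N * Real.tanh a ^ hamming N x z
      have h1 : Real.tanh a ^ N ≤ Real.tanh a ^ hamming N x z := by
        apply pow_le_pow_of_le_one htanh_pos.le htanh_le
        unfold hamming
        calc (Finset.univ.filter fun i => x i ≠ z i).card ≤ Finset.univ.card :=
              Finset.card_filter_le _ _
          _ = N := by simp
      calc c ^ N = (Real.cosh a * Real.exp (-a) * Real.tanh a) ^ N := by rw [hckey]
        _ = (Real.cosh a * Real.exp (-a)) ^ N * Real.tanh a ^ N := by ring
        _ ≤ (Real.cosh a * Real.exp (-a)) ^ N * Real.tanh a ^ hamming N x z := by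
            apply mul_le_mul_of_nonneg_left h1
            positivity
    have hnn : ∀ z x : Fin N → Bool, 0 ≤ G2mat N Δt Γ t z x := by
      intro z x
      show (0:ℝ) ≤ (Real.cosh a * Real.exp (-a)) ^ N * Real.tanh a ^ hamming N x z
      positivity
    rw [ergCoeff]
    rw [ge_iff_le, sub_sub_cancel]
    apply Finset.le_inf'
    intro p _
    set z₀ : Fin N → Bool := fun _ => false
    calc c ^ N ≤ min (G2mat N Δt Γ t z₀ p.1) (G2mat N Δt Γ t z₀ p.2) :=
          le_min (hentry z₀ p.1) (hentry z₀ p.2)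
      _ ≤ ∑ z, min (G2mat N Δt Γ t z p.1) (G2mat N Δt Γ t z p.2) := by
          apply Finset.single_le_sum (f := fun z =>
            min (G2mat N Δt Γ t z p.1) (G2mat N Δt Γ t z p.2)) ?_ (Finset.mem_univ z₀)
          intro z _
          exact le_min (hnn z p.1) (hnn z p.2)

end QAPaper
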